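/- For α > 0 and the cost c(x,y) = (1/α) log(1 + α x·y) on ℝ₊₊^d × ℝ₊₊^d, a function f : ℝ₊₊^d → ℝ is c-concave if and only if e^{αf} is concave on ℝ₊₊^d. -/

import Mathlib

/-!
Put `F = exp (α f)`. Since `exp (α (c(x, y) - m)) = exp (-α m) (1 + α ⟪x, y⟫)`, the `c`-affine
majorants `c(·, y) - m` of `f` correspond to the affine majorants of `F` with positive intercept
and positive slopes. The identity `f^{cc} = f` says that `f` is the lower envelope of its `c`-affine
majorants, i.e. that `F` is the lower envelope of such affine majorants, and such an envelope is
concave. Conversely, a concave `F` has a supergradient at each point of the open orthant; as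
`F > 0`, the supporting affine function has nonnegative intercept and slopes, and adding
`δ (1 + ∑ xᵢ)` makes them positive at an arbitrarily small cost at the base point.

The infima are conditional infima, equal to `0` on families unbounded below. On the `c`-concave
side the families `c(·, y) - f` are nevertheless all bounded below: otherwise `f` would be the
infimum of the `c(x, ·)`, which is at most every `c(x, y)`; and one affine majorant of `F` rescales
to a majorant whose slope is any given positive vector.
-/

open scoped RealInnerProductSpace
open Real Set Filter Topology

section CTransform

variable {X Y : Type*}

noncomputable def cTransform (c : X → Y → ℝ) (f : X → ℝ) (y : Y) : ℝ :=
  ⨅ x, (c x y - f x)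

variable {c : X → Y → ℝ} {f : X → ℝ}

lemma le_sub_cTransform {y : Y} (h : BddBelow (range fun x => c x y - f x)) (x : X) :
    f x ≤ c x y - cTransform c f y := by
  have := ciInf_le h x
  unfold cTransform
  linarith

lemma le_cTransform_cTransform [Nonempty Y] (h : ∀ y, BddBelow (range fun x => c x y - f x))
    (x : X) : f x ≤ cTransform (flip c) (cTransform c f) x :=
  le_ciInf fun y => by simpa [flip] using le_sub_cTransform (h y) x

lemma exists_bddBelow_of_cTransform_cTransform_eq [Nonempty Y]
    (hc : ∀ x, BddBelow (range (c x))) (h : ∀ x, cTransform (flip c) (cTransform c f) x = f x) :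
    ∃ y, BddBelow (range fun x => c x y - f x) := by
  by_contra! hunb
  obtain ⟨y₀⟩ := ‹Nonempty Y›
  refine hunb y₀ ⟨0, forall_mem_range.2 fun x => ?_⟩
  -- every `cTransform c f y` is the junk value `0`, so `f` is the infimum of the `c x ·`
  have hf : f x = ⨅ y, c x y := by
    simp [← h x, cTransform, flip, Real.iInf_of_not_bddBelow (hunb _)]
  simpa [hf] using ciInf_le (hc x) y₀

theorem cTransform_cTransform_eq_iff [Nonempty Y]
    (h : ∀ y, BddBelow (range fun x => c x y - f x)) :
    (∀ x, cTransform (flip c) (cTransform c f) x = f x) ↔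
      ∀ x, ∀ r > f x, ∃ y m, (∀ x', f x' ≤ c x' y - m) ∧ c x y - m < r := by
  constructor
  · intro hcc x r hr
    have hlt : cTransform (flip c) (cTransform c f) x < r := (hcc x).symm ▸ hr
    obtain ⟨y, hy⟩ := exists_lt_of_ciInf_lt hlt
    exact ⟨y, cTransform c f y, le_sub_cTransform (h y), hy⟩
  · intro henv x
    refine le_antisymm (le_of_forall_gt fun r hr => ?_) (le_cTransform_cTransform h x)
    obtain ⟨y, m, hmaj, hlt⟩ := henv x r hr
    have : Nonempty X := ⟨x⟩
    have hm : m ≤ cTransform c f y := le_ciInf fun x' => by linarith [hmaj x']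
    have hbdd : BddBelow (range fun y => flip c y x - cTransform c f y) :=
      ⟨f x, forall_mem_range.2 fun y => le_sub_cTransform (h y) x⟩
    calc cTransform (flip c) (cTransform c f) x ≤ c x y - cTransform c f y := ciInf_le hbdd y
      _ < r := by linarith

end CTransform

theorem concaveOn_of_forall_exists_concaveOn_le_lt {E : Type*} [AddCommMonoid E] [Module ℝ E]
    {s : Set E} (hs : Convex ℝ s) {F : E → ℝ}
    (h : ∀ x ∈ s, ∀ R > F x, ∃ φ : E → ℝ, ConcaveOn ℝ s φ ∧ (∀ x' ∈ s, F x' ≤ φ x') ∧ φ x < R) :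
    ConcaveOn ℝ s F := by
  refine ⟨hs, fun p hp q hq a b ha hb hab => le_of_forall_gt fun R hR => ?_⟩
  obtain ⟨φ, hφ, hmaj, hlt⟩ := h _ (hs hp hq ha hb hab) R hR
  calc a • F p + b • F q ≤ a • φ p + b • φ q := by
        gcongr
        exacts [hmaj p hp, hmaj q hq]
    _ ≤ φ (a • p + b • q) := hφ.2 hp hq ha hb hab
    _ < R := hlt

theorem ConcaveOn.exists_le_add_inner {E : Type*} [NormedAddCommGroup E] [InnerProductSpace ℝ E]
    [FiniteDimensional ℝ E] {C : Set E} (hC : IsOpen C) {F : E → ℝ} (hF : ConcaveOn ℝ C F)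
    {x₀ : E} (hx₀ : x₀ ∈ C) : ∃ s : E, ∀ x ∈ C, F x ≤ F x₀ + ⟪s, x - x₀⟫ := by
  set H : Set (E × ℝ) := {p | p.1 ∈ C ∧ p.2 < F p.1}
  have hHopen : IsOpen H := by
    have hcont : ContinuousOn (fun p : E × ℝ => F p.1 - p.2) (C ×ˢ univ) :=
      ((hF.continuousOn hC).comp continuousOn_fst fun p hp => hp.1).sub continuousOn_snd
    convert hcont.isOpen_inter_preimage (hC.prod isOpen_univ) (isOpen_Ioi (a := 0)) using 1
    ext p
    simp [H]
  obtain ⟨L, hL⟩ := geometric_hahn_banach_open_point hF.convex_strict_hypograph hHopen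
    (x := (x₀, F x₀)) (by simp)
  set ℓ : StrongDual ℝ E := L.comp (ContinuousLinearMap.inl ℝ E ℝ)
  set β := L (0, 1)
  have hL_apply : ∀ x r, L (x, r) = ℓ x + r * β := fun x r => by
    have : ((x, r) : E × ℝ) = (x, 0) + r • ((0 : E), (1 : ℝ)) := by simp
    rw [this, map_add, map_smul, smul_eq_mul]
    rfl
  have hβ : 0 < β := by
    have := hL (x₀, F x₀ - 1) ⟨hx₀, by simp⟩
    rw [hL_apply, hL_apply] at this
    linarith
  -- the separating hyperplane is not vertical, so it is the graph of an affine majorant of `F`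
  have hsupp : ∀ x ∈ C, ℓ x + F x * β ≤ ℓ x₀ + F x₀ * β := fun x hx => by
    rw [← le_sub_iff_add_le', ← le_div_iff₀ hβ]
    refine le_of_forall_lt fun r hr => ?_
    have := hL (x, r) ⟨hx, hr⟩
    rw [hL_apply, hL_apply] at this
    rw [lt_div_iff₀ hβ]
    linarith
  refine ⟨-β⁻¹ • (InnerProductSpace.toDual ℝ E).symm ℓ, fun x hx => ?_⟩
  rw [real_inner_smul_left, InnerProductSpace.toDual_symm_apply, map_sub]
  have := hsupp x hx
  field_simp
  linarith

lemma nonneg_of_forall_pos_nonneg_add_mul {u v : ℝ} (h : ∀ t > 0, 0 ≤ u + t * v) :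
    0 ≤ u ∧ 0 ≤ v := by
  have key : ∀ {u v : ℝ}, (∀ t > 0, 0 ≤ u + t * v) → 0 ≤ u := fun {u v} h =>
    ge_of_tendsto (((continuous_const.add (continuous_id.mul continuous_const)).tendsto' 0 u
      (by simp)).mono_left (nhdsWithin_le_nhds (s := Ioi 0)))
      (eventually_nhdsWithin_of_forall fun t ht => h t ht)
  refine ⟨key h, key (v := u) fun t ht => ?_⟩
  have := h t⁻¹ (inv_pos.2 ht)
  calc (0 : ℝ) ≤ t * (u + t⁻¹ * v) := by positivity
    _ = v + t * u := by field_simp; ring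

section Orthant

variable {ι : Type*}

def posOrthant (ι : Type*) : Set (EuclideanSpace ℝ ι) := {x | ∀ i, 0 < x i}

@[simp] lemma mem_posOrthant {x : EuclideanSpace ℝ ι} : x ∈ posOrthant ι ↔ ∀ i, 0 < x i := Iff.rfl

lemma convex_posOrthant : Convex ℝ (posOrthant ι) := fun p hp q hq a b ha hb hab i => by
  rcases ha.eq_or_lt with rfl | ha
  · simp_all
  · simpa using add_pos_of_pos_of_nonneg (mul_pos ha (hp i)) (mul_nonneg hb (hq i).le)

lemma one_mem_posOrthant : (WithLp.toLp 2 1 : EuclideanSpace ℝ ι) ∈ posOrthant ι := by simp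

variable [Fintype ι]

lemma isOpen_posOrthant : IsOpen (posOrthant ι) := by
  simp only [posOrthant, ofPred_forall]
  exact isOpen_iInter_of_finite fun i => isOpen_lt continuous_const (PiLp.continuous_apply 2 _ i)

lemma inner_le_inner_of_mem_posOrthant {x y z : EuclideanSpace ℝ ι} (hx : x ∈ posOrthant ι)
    (h : ∀ i, y i ≤ z i) : ⟪x, y⟫ ≤ ⟪x, z⟫ := by
  simp only [PiLp.inner_apply, RCLike.inner_apply, conj_trivial]
  exact Finset.sum_le_sum fun i _ => mul_le_mul_of_nonneg_right (h i) (hx i).le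

lemma inner_nonneg_of_mem_posOrthant {x y : EuclideanSpace ℝ ι} (hx : x ∈ posOrthant ι)
    (hy : y ∈ posOrthant ι) : 0 ≤ ⟪x, y⟫ := by
  simpa using inner_le_inner_of_mem_posOrthant (y := 0) hx fun i => (hy i).le

lemma exists_mul_le_of_mem_posOrthant (y₀ : EuclideanSpace ℝ ι) {y : EuclideanSpace ℝ ι}
    (hy : y ∈ posOrthant ι) : ∃ t ∈ Ioc (0 : ℝ) 1, ∀ i, t * y₀ i ≤ y i := by
  have hsmall : ∀ i, ∀ᶠ t in 𝓝[>] (0 : ℝ), t * y₀ i ≤ y i := fun i =>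
    nhdsWithin_le_nhds <| ((continuous_id.mul continuous_const).tendsto' 0 0 (by simp)).eventually
      (eventually_le_nhds (hy i))
  obtain ⟨t, ht, hty⟩ := (Eventually.and (Ioo_mem_nhdsGT one_pos)
    (eventually_all.2 hsmall)).exists
  exact ⟨t, Ioo_subset_Ioc_self ht, hty⟩

lemma nonneg_of_forall_mem_posOrthant_nonneg_add_inner {b : ℝ} {s : EuclideanSpace ℝ ι}
    (h : ∀ x ∈ posOrthant ι, 0 ≤ b + ⟪s, x⟫) : 0 ≤ b ∧ ∀ i, 0 ≤ s i := by
  classical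
  set one : EuclideanSpace ℝ ι := WithLp.toLp 2 1
  refine ⟨(nonneg_of_forall_pos_nonneg_add_mul (v := ⟪s, one⟫) fun t ht => ?_).1,
    fun i => (nonneg_of_forall_pos_nonneg_add_mul (u := b + ⟪s, one⟫) fun t ht => ?_).2⟩
  · simpa [inner_smul_right] using h (t • one) fun i => by simpa [one] using ht
  · have hx : one + t • EuclideanSpace.single i 1 ∈ posOrthant ι := fun j => by
      by_cases hj : j = i
      · simp [one, hj]; positivity
      · simp [one, hj]
    simpa [inner_add_right, inner_smul_right, EuclideanSpace.inner_single_right, add_assoc]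
      using h _ hx

end Orthant

lemma concaveOn_mul_one_add_mul_inner {E : Type*} [NormedAddCommGroup E] [InnerProductSpace ℝ E]
    {s : Set E} (hs : Convex ℝ s) (k α : ℝ) (y : E) :
    ConcaveOn ℝ s fun x => k * (1 + α * ⟪x, y⟫) := by
  refine ⟨hs, fun p _ q _ a b _ _ hab => le_of_eq ?_⟩
  simp only [inner_add_left, real_inner_smul_left, smul_eq_mul]
  linear_combination k * hab

lemma exp_mul_log_div {α k : ℝ} (hα : α ≠ 0) (hk : 0 < k) : exp (α * (log k / α)) = k := by
  rw [mul_div_cancel₀ _ hα, exp_log hk]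

section LogCost

variable {ι : Type*} [Fintype ι] {α : ℝ}

instance : Nonempty (posOrthant ι) := ⟨⟨_, one_mem_posOrthant⟩⟩

lemma one_add_mul_inner_pos (hα : 0 ≤ α) {x y : EuclideanSpace ℝ ι} (hx : x ∈ posOrthant ι)
    (hy : y ∈ posOrthant ι) : 0 < 1 + α * ⟪x, y⟫ := by
  have := inner_nonneg_of_mem_posOrthant hx hy
  positivity

lemma exists_mul_one_add_inner_majorant_of_majorant (hα : 0 ≤ α) {F : EuclideanSpace ℝ ι → ℝ}
    {y₀ y : EuclideanSpace ℝ ι} (hy : y ∈ posOrthant ι)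
    (h : ∃ k > 0, ∀ x ∈ posOrthant ι, F x ≤ k * (1 + α * ⟪x, y₀⟫)) :
    ∃ k > 0, ∀ x ∈ posOrthant ι, F x ≤ k * (1 + α * ⟪x, y⟫) := by
  obtain ⟨k, hk, hmaj⟩ := h
  obtain ⟨t, ⟨ht, ht1⟩, hty⟩ := exists_mul_le_of_mem_posOrthant y₀ hy
  refine ⟨k / t, div_pos hk ht, fun x hx => ?_⟩
  have hinner : t * ⟪x, y₀⟫ ≤ ⟪x, y⟫ := by
    simpa [inner_smul_right] using inner_le_inner_of_mem_posOrthant (y := t • y₀) hx hty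
  calc F x ≤ k * (1 + α * ⟪x, y₀⟫) := hmaj x hx
    _ = k / t * (t * (1 + α * ⟪x, y₀⟫)) := by field_simp
    _ ≤ k / t * (1 + α * ⟪x, y⟫) := by gcongr; nlinarith

theorem ConcaveOn.exists_mul_one_add_inner_majorant (hα : 0 < α) {F : EuclideanSpace ℝ ι → ℝ}
    (hF : ConcaveOn ℝ (posOrthant ι) F) (hFpos : ∀ x ∈ posOrthant ι, 0 < F x)
    {x₀ : EuclideanSpace ℝ ι} (hx₀ : x₀ ∈ posOrthant ι) {R : ℝ} (hR : F x₀ < R) :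
    ∃ y ∈ posOrthant ι, ∃ k > 0,
      (∀ x ∈ posOrthant ι, F x ≤ k * (1 + α * ⟪x, y⟫)) ∧ k * (1 + α * ⟪x₀, y⟫) < R := by
  set one : EuclideanSpace ℝ ι := WithLp.toLp 2 1
  obtain ⟨s, hs⟩ := hF.exists_le_add_inner isOpen_posOrthant hx₀
  set b := F x₀ - ⟪s, x₀⟫
  have hmaj : ∀ x ∈ posOrthant ι, F x ≤ b + ⟪s, x⟫ := fun x hx => by
    linarith [hs x hx, inner_sub_right (𝕜 := ℝ) s x x₀]
  obtain ⟨hb, hs⟩ := nonneg_of_forall_mem_posOrthant_nonneg_add_inner fun x hx =>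
    (hFpos x hx).le.trans (hmaj x hx)
  -- perturb the supporting hyperplane so that its intercept and slopes become positive
  obtain ⟨δ, hδ, hδR⟩ : ∃ δ > 0, F x₀ + δ * (1 + ⟪one, x₀⟫) < R := by
    have : Tendsto (fun δ => F x₀ + δ * (1 + ⟪one, x₀⟫)) (𝓝[>] 0) (𝓝 (F x₀)) :=
      ((continuous_const.add (continuous_id.mul continuous_const)).tendsto' 0 _
        (by simp)).mono_left nhdsWithin_le_nhds
    exact ((eventually_mem_nhdsWithin).and (this.eventually (gt_mem_nhds hR))).exists
  set k := b + δ
  have hk : 0 < k := by positivity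
  set y := (α * k)⁻¹ • (s + δ • one)
  have hy : ∀ x, k * (1 + α * ⟪x, y⟫) = b + ⟪s, x⟫ + δ * (1 + ⟪one, x⟫) := fun x => by
    simp only [y, inner_smul_right, inner_add_right, real_inner_comm s x, real_inner_comm one x]
    field_simp
    ring
  refine ⟨y, fun i => ?_, k, hk, fun x hx => ?_, by rw [hy]; simpa [b] using hδR⟩
  · simp only [y, one, PiLp.smul_apply, PiLp.add_apply, smul_eq_mul, Pi.one_apply]
    have := hs i
    positivity
  · rw [hy]
    have := inner_nonneg_of_mem_posOrthant one_mem_posOrthant hx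
    nlinarith [hmaj x hx]

noncomputable def logCost (α : ℝ) (x y : posOrthant ι) : ℝ :=
  1 / α * log (1 + α * ⟪(x : EuclideanSpace ℝ ι), y⟫)

lemma logCost_nonneg (hα : 0 < α) (x y : posOrthant ι) : 0 ≤ logCost α x y := by
  have := inner_nonneg_of_mem_posOrthant x.2 y.2
  unfold logCost
  have : 0 ≤ log (1 + α * ⟪(x : EuclideanSpace ℝ ι), y⟫) := log_nonneg (by nlinarith)
  positivity

lemma exp_mul_logCost_sub (hα : 0 < α) (x y : posOrthant ι) (m : ℝ) :
    exp (α * (logCost α x y - m)) = exp (-(α * m)) * (1 + α * ⟪(x : EuclideanSpace ℝ ι), y⟫) := by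
  rw [logCost, mul_sub, ← mul_assoc, mul_one_div_cancel hα.ne', one_mul, sub_eq_neg_add, exp_add,
    exp_log (one_add_mul_inner_pos hα.le x.2 y.2)]

lemma le_logCost_sub_iff (hα : 0 < α) (x y : posOrthant ι) (m t : ℝ) :
    t ≤ logCost α x y - m ↔
      exp (α * t) ≤ exp (-(α * m)) * (1 + α * ⟪(x : EuclideanSpace ℝ ι), y⟫) := by
  rw [← exp_mul_logCost_sub hα, exp_le_exp, mul_le_mul_iff_right₀ hα]

lemma logCost_sub_lt_iff (hα : 0 < α) (x y : posOrthant ι) (m r : ℝ) :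
    logCost α x y - m < r ↔
      exp (-(α * m)) * (1 + α * ⟪(x : EuclideanSpace ℝ ι), y⟫) < exp (α * r) := by
  rw [← exp_mul_logCost_sub hα, exp_lt_exp, mul_lt_mul_iff_right₀ hα]

variable (f : EuclideanSpace ℝ ι → ℝ)

lemma bddBelow_logCost_sub_iff (hα : 0 < α) (y : posOrthant ι) :
    BddBelow (range fun x : posOrthant ι => logCost α x y - f x) ↔
      ∃ k > 0, ∀ x ∈ posOrthant ι, exp (α * f x) ≤ k * (1 + α * ⟪x, y⟫) := by
  simp only [bddBelow_def, forall_mem_range, Subtype.forall]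
  constructor
  · rintro ⟨m, hm⟩
    exact ⟨_, exp_pos _, fun x hx => (le_logCost_sub_iff hα _ _ _ _).1 (le_sub_comm.1 (hm x hx))⟩
  · rintro ⟨k, hk, hmaj⟩
    refine ⟨-(log k / α), fun x hx => le_sub_comm.1 ((le_logCost_sub_iff hα _ _ _ _).2 ?_)⟩
    rw [mul_neg, neg_neg, exp_mul_log_div hα.ne' hk]
    exact hmaj x hx

lemma forall_exists_logCost_sub_iff (hα : 0 < α) :
    (∀ x : posOrthant ι, ∀ r > f x, ∃ (y : posOrthant ι) (m : ℝ),
        (∀ x' : posOrthant ι, f x' ≤ logCost α x' y - m) ∧ logCost α x y - m < r) ↔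
      ∀ x ∈ posOrthant ι, ∀ R > exp (α * f x), ∃ y ∈ posOrthant ι, ∃ k > 0,
        (∀ x' ∈ posOrthant ι, exp (α * f x') ≤ k * (1 + α * ⟪x', y⟫)) ∧
          k * (1 + α * ⟪x, y⟫) < R := by
  rw [Subtype.forall]
  refine forall₂_congr fun x hx => ?_
  simp only [Subtype.forall, Subtype.exists, le_logCost_sub_iff hα, logCost_sub_lt_iff hα]
  constructor
  · intro h R hR
    have hRpos : 0 < R := (exp_pos _).trans hR
    obtain ⟨y, hy, m, hmaj, hlt⟩ := h (log R / α) (by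
      rwa [gt_iff_lt, lt_div_iff₀' hα, lt_log_iff_exp_lt hRpos])
    exact ⟨y, hy, _, exp_pos _, hmaj, exp_mul_log_div hα.ne' hRpos ▸ hlt⟩
  · intro h r hr
    obtain ⟨y, hy, k, hk, hmaj, hlt⟩ := h (exp (α * r)) (by gcongr)
    have hexp : exp (-(α * -(log k / α))) = k := by
      rw [mul_neg, neg_neg, exp_mul_log_div hα.ne' hk]
    exact ⟨y, hy, -(log k / α), by rwa [hexp], by rwa [hexp]⟩

theorem cTransform_cTransform_logCost_eq_iff (hα : 0 < α) :
    (∀ x : posOrthant ι,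
      cTransform (flip (logCost α)) (cTransform (logCost α) (f ∘ (↑))) x = f x) ↔
      ConcaveOn ℝ (posOrthant ι) fun x => exp (α * f x) := by
  have hbdd_iff := bddBelow_logCost_sub_iff f hα
  have henv_iff := forall_exists_logCost_sub_iff f hα
  constructor
  · intro hcc
    obtain ⟨y₀, hy₀⟩ := exists_bddBelow_of_cTransform_cTransform_eq
      (fun x => ⟨0, forall_mem_range.2 (logCost_nonneg hα x)⟩) hcc
    have hbdd : ∀ y, BddBelow (range fun x : posOrthant ι => logCost α x y - f x) := fun y =>
      (hbdd_iff y).2 (exists_mul_one_add_inner_majorant_of_majorant hα.le y.2 ((hbdd_iff y₀).1 hy₀))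
    have henv := henv_iff.1 ((cTransform_cTransform_eq_iff hbdd).1 hcc)
    refine concaveOn_of_forall_exists_concaveOn_le_lt convex_posOrthant fun x hx R hR => ?_
    obtain ⟨y, -, k, -, hmaj, hlt⟩ := henv x hx R hR
    exact ⟨_, concaveOn_mul_one_add_mul_inner convex_posOrthant k α y, hmaj, hlt⟩
  · intro hconc
    have henv : ∀ x ∈ posOrthant ι, ∀ R > exp (α * f x), _ := fun x hx R hR =>
      hconc.exists_mul_one_add_inner_majorant hα (fun x _ => exp_pos _) hx hR
    have hbdd : ∀ y, BddBelow (range fun x : posOrthant ι => logCost α x y - f x) := by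
      intro y
      obtain ⟨y₀, -, k, hk, hmaj, -⟩ := henv _ one_mem_posOrthant _ (lt_add_one _)
      exact (hbdd_iff y).2 (exists_mul_one_add_inner_majorant_of_majorant hα.le y.2 ⟨k, hk, hmaj⟩)
    exact (cTransform_cTransform_eq_iff hbdd).2 (henv_iff.2 henv)

end LogCost

theorem stmt6 {d : ℕ} (α : ℝ) (hα : 0 < α)
    (f : EuclideanSpace ℝ (Fin d) → ℝ) :
    (∀ x : EuclideanSpace ℝ (Fin d), (∀ i, 0 < x i) →
      (⨅ y : {z : EuclideanSpace ℝ (Fin d) // ∀ i, 0 < z i},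
        ((1/α) * Real.log (1 + α * ⟪x, (y : EuclideanSpace ℝ (Fin d))⟫) -
          ⨅ x' : {z : EuclideanSpace ℝ (Fin d) // ∀ i, 0 < z i},
            ((1/α) * Real.log
                (1 + α * ⟪(x' : EuclideanSpace ℝ (Fin d)),
                  (y : EuclideanSpace ℝ (Fin d))⟫) -
              f x'))) = f x)
    ↔ ConcaveOn ℝ {x : EuclideanSpace ℝ (Fin d) | ∀ i, 0 < x i}
        (fun x => Real.exp (α * f x)) := by
  have := cTransform_cTransform_logCost_eq_iff f hα
  rw [Subtype.forall] at this
  exact this
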